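/- Let V be a finite-dimensional vector space over a field of characteristic zero equipped with a non-degenerate symmetric bilinear form g, and let {e_j} be a g-orthonormal basis (g(e_j,e_k) = ±δ_{jk}) with dual basis {ε^j} of V*. In the Clifford algebra Cl(V × V*), for any symmetric polynomial p in n variables, the element p(e_1ε^1, …, e_nε^n) is invariant under the diagonal action of the orthogonal group O(g). -/

import Mathlib

open CliffordAlgebra

/-- Evaluation of a multivariate polynomial at a family of (pairwise commuting) elements of a
possibly noncommutative algebra, taking products of powers in the fixed index order. -/
noncomputable def evalAt {k : Type*} [CommSemiring k] {A : Type*} [Ring A] [Algebra k A]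
    {n : ℕ} (x : Fin n → A) (p : MvPolynomial (Fin n) k) : A :=
  (AddMonoidAlgebra.coeff p).sum fun m c => c • (List.ofFn fun j => x j ^ m j).prod

/-!
Write `xⱼ = eⱼεʲ`. Since `(eⱼ, 0)` and `(0, εʲ)` are orthogonal and `Q(eⱼ, 0) Q(0, εʲ) = sⱼ² = 1`,
the `xⱼ` commute pairwise and `xⱼ² = -1`, so every power sum `∑ xⱼ ^ m` is `±n` or `±∑ xⱼ`.
The element `∑ eⱼ ⊗ εʲ` of `V ⊗ V*` corresponds to `id_V`, hence does not depend on the basis;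
as `σ × σ⁻ᵀ` maps it to the same element built from the basis `σ e`, `∑ xⱼ` is fixed. The images
`σ(xⱼ)` satisfy the same relations, so they have the same power sums as the `xⱼ`. In
characteristic zero, Newton's identities and the fundamental theorem of symmetric polynomials
turn this into equality on every symmetric polynomial.
-/

namespace MvPolynomial

variable {σ k A : Type*} [Fintype σ] [Field k] [CharZero k] [Semiring A] [Algebra k A]

theorem map_esymm_eq_of_map_psum_eq {f g : MvPolynomial σ k →ₐ[k] A}
    (h : ∀ m, f (psum σ k m) = g (psum σ k m)) (r : ℕ) :
    f (esymm σ k r) = g (esymm σ k r) := by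
  induction r using Nat.strong_induction_on with
  | _ r ih =>
    have newton := mul_esymm_eq_sum σ k r
    -- `A` is only a semiring, so `-1` is turned into a constant, on which `f` and `g` agree.
    rw [← C_1, ← C_neg] at newton
    have hmul : f (r * esymm σ k r) = g (r * esymm σ k r) := by
      simp only [newton, map_mul, map_pow, map_sum, algHom_C]
      refine congrArg _ (Finset.sum_congr rfl fun a ha => ?_)
      rw [ih a.1 (Finset.mem_filter.mp ha).2, h]
    rcases Nat.eq_zero_or_pos r with rfl | hr
    · simp
    · rw [← map_natCast (algebraMap k _), ← Algebra.smul_def, map_smul, map_smul] at hmul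
      exact smul_right_injective A (Nat.cast_ne_zero.mpr hr.ne') hmul

theorem map_eq_of_isSymmetric_of_map_psum_eq {f g : MvPolynomial σ k →ₐ[k] A}
    (h : ∀ m, f (psum σ k m) = g (psum σ k m)) {p : MvPolynomial σ k} (hp : p.IsSymmetric) :
    f p = g p := by
  obtain ⟨q, hq⟩ := esymmAlgHom_surjective k (n := Fintype.card σ) le_rfl ⟨p, hp⟩
  have hcomp : f.comp (aeval fun i : Fin (Fintype.card σ) => esymm σ k (i + 1))
      = g.comp (aeval fun i : Fin (Fintype.card σ) => esymm σ k (i + 1)) :=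
    algHom_ext fun i => by simpa using map_esymm_eq_of_map_psum_eq h (i + 1)
  have hpq : p = aeval (fun i : Fin (Fintype.card σ) => esymm σ k (i + 1)) q := by
    rw [← esymmAlgHom_apply, hq]
  rw [hpq]
  exact DFunLike.congr_fun hcomp q

end MvPolynomial

section evalAt

open scoped IsMulCommutative

variable {k : Type*} [CommRing k] {n : ℕ}

theorem AlgHom.map_evalAt {A B : Type*} [Ring A] [Algebra k A] [Ring B] [Algebra k B]
    (f : A →ₐ[k] B) (x : Fin n → A) (p : MvPolynomial (Fin n) k) :
    f (evalAt x p) = evalAt (fun j => f (x j)) p := by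
  simp only [evalAt, map_finsuppSum, map_smul, map_list_prod, List.map_ofFn, Function.comp_def,
    map_pow]

theorem evalAt_eq_aeval {C : Type*} [CommRing C] [Algebra k C] (x : Fin n → C)
    (p : MvPolynomial (Fin n) k) : evalAt x p = MvPolynomial.aeval x p := by
  simp only [evalAt, MvPolynomial.aeval_def, MvPolynomial.eval₂_eq', Algebra.smul_def,
    List.prod_ofFn]
  rfl

theorem Algebra.isMulCommutative_adjoin_range {A : Type*} [Ring A] [Algebra k A]
    {x : Fin n → A} (hx : ∀ i j, Commute (x i) (x j)) :
    IsMulCommutative (Algebra.adjoin k (Set.range x)) :=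
  Algebra.isMulCommutative_adjoin k <| by
    rintro _ ⟨i, rfl⟩ _ ⟨j, rfl⟩
    exact hx i j

noncomputable def aevalOfCommute {A : Type*} [Ring A] [Algebra k A] (x : Fin n → A)
    (hx : ∀ i j, Commute (x i) (x j)) : MvPolynomial (Fin n) k →ₐ[k] A :=
  have := Algebra.isMulCommutative_adjoin_range (k := k) hx
  (Algebra.adjoin k (Set.range x)).val.comp
    (MvPolynomial.aeval fun j => ⟨x j, Algebra.subset_adjoin ⟨j, rfl⟩⟩)

theorem aevalOfCommute_X {A : Type*} [Ring A] [Algebra k A] (x : Fin n → A)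
    (hx : ∀ i j, Commute (x i) (x j)) (j : Fin n) :
    aevalOfCommute (k := k) x hx (MvPolynomial.X j) = x j := by
  simp [aevalOfCommute]

theorem evalAt_eq_aevalOfCommute {A : Type*} [Ring A] [Algebra k A] (x : Fin n → A)
    (hx : ∀ i j, Commute (x i) (x j)) (p : MvPolynomial (Fin n) k) :
    evalAt x p = aevalOfCommute x hx p := by
  have := Algebra.isMulCommutative_adjoin_range (k := k) hx
  rw [aevalOfCommute, AlgHom.comp_apply, ← evalAt_eq_aeval, AlgHom.map_evalAt]
  rfl

end evalAt

theorem evalAt_eq_of_sum_pow_eq {k A : Type*} [Field k] [CharZero k] [Ring A] [Algebra k A]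
    {n : ℕ} {x y : Fin n → A} (hx : ∀ i j, Commute (x i) (x j))
    (hy : ∀ i j, Commute (y i) (y j)) (h : ∀ m, ∑ j, x j ^ m = ∑ j, y j ^ m)
    {p : MvPolynomial (Fin n) k} (hp : p.IsSymmetric) :
    evalAt x p = evalAt y p := by
  rw [evalAt_eq_aevalOfCommute x hx, evalAt_eq_aevalOfCommute y hy]
  refine MvPolynomial.map_eq_of_isSymmetric_of_map_psum_eq (fun m => ?_) hp
  simpa [MvPolynomial.psum, aevalOfCommute_X] using h m

theorem Finset.sum_pow_eq_of_sq_eq_neg_one {ι A : Type*} [Fintype ι] [Ring A] {x y : ι → A}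
    (hx : ∀ j, x j ^ 2 = -1) (hy : ∀ j, y j ^ 2 = -1) (h : ∑ j, x j = ∑ j, y j) (m : ℕ) :
    ∑ j, x j ^ m = ∑ j, y j ^ m := by
  obtain ⟨t, rfl | rfl⟩ := Nat.even_or_odd' m
  · simp only [pow_mul, hx, hy]
  · simp only [pow_succ, pow_mul, hx, hy, ← Finset.mul_sum, h]

namespace Module.Basis

variable {R M ι : Type*} [CommRing R] [AddCommGroup M] [Module R M] [Fintype ι]
  [DecidableEq ι]

open TensorProduct in
theorem dualTensorHom_sum_dualBasis_tmul (b : Basis ι R M) :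
    dualTensorHom R M M (∑ i, b.dualBasis i ⊗ₜ b i) = LinearMap.id := by
  ext m
  simp [map_sum, dualTensorHom_apply, b.sum_repr]

open TensorProduct in
theorem sum_apply_dualBasis_eq {N ι' : Type*} [AddCommGroup N] [Module R N] [Fintype ι']
    [DecidableEq ι'] (f : M →ₗ[R] Dual R M →ₗ[R] N) (b : Basis ι R M) (b' : Basis ι' R M) :
    ∑ i, f (b i) (b.dualBasis i) = ∑ i, f (b' i) (b'.dualBasis i) := by
  have h : ∑ i, b.dualBasis i ⊗ₜ[R] b i = ∑ i, b'.dualBasis i ⊗ₜ[R] b' i :=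
    (dualTensorHomEquivOfBasis b).injective <| by
      simp only [dualTensorHomEquivOfBasis_apply, dualTensorHom_sum_dualBasis_tmul]
  simpa using congrArg (lift f.flip) h

theorem map_dualBasis {M' : Type*} [AddCommGroup M'] [Module R M'] (b : Basis ι R M)
    (σ : M ≃ₗ[R] M') (i : ι) :
    (b.map σ).dualBasis i = (σ.symm : M' →ₗ[R] M).dualMap (b.dualBasis i) := by
  ext m
  simp

end Module.Basis

namespace LinearMap.BilinForm

variable {K V ι : Type*} [Field K] [AddCommGroup V] [Module K V] [FiniteDimensional K V]
  [Fintype ι] [DecidableEq ι] {B : LinearMap.BilinForm K V} {b : Module.Basis ι K V}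
  {s : ι → K}

theorem toDual_symm_dualBasis (hB : B.Nondegenerate)
    (horth : ∀ i j, B (b i) (b j) = if i = j then s i else 0) (hs : ∀ i, s i * s i = 1)
    (j : ι) :
    (B.toDual hB).symm (b.dualBasis j) = s j • b j := by
  rw [LinearEquiv.symm_apply_eq]
  refine b.ext fun i => ?_
  rcases eq_or_ne j i with rfl | hji
  · simp [toDual_def, horth, hs]
  · simp [toDual_def, horth, hji]

theorem compl₁₂_toDual_symm_dualBasis (hB : B.Nondegenerate)
    (horth : ∀ i j, B (b i) (b j) = if i = j then s i else 0) (hs : ∀ i, s i * s i = 1)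
    (i j : ι) :
    B.compl₁₂ ((B.toDual hB).symm : Module.Dual K V →ₗ[K] V)
        ((B.toDual hB).symm : Module.Dual K V →ₗ[K] V) (b.dualBasis i) (b.dualBasis j)
      = if i = j then s i else 0 := by
  rw [LinearMap.compl₁₂_apply, LinearEquiv.coe_coe, toDual_symm_dualBasis hB horth hs,
    toDual_symm_dualBasis hB horth hs]
  rcases eq_or_ne i j with rfl | hij
  · simp [horth, hs]
  · simp [horth, hij]

end LinearMap.BilinForm

theorem LinearMap.BilinMap.isOrtho_toQuadraticMap {R M : Type*} [CommRing R] [AddCommGroup M]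
    [Module R M] {B : LinearMap.BilinMap R M R} {x y : M} (hxy : B x y = 0) (hyx : B y x = 0) :
    B.toQuadraticMap.IsOrtho x y :=
  QuadraticMap.isOrtho_polarBilin.mp <| by
    simp [LinearMap.BilinMap.polar_toQuadraticMap, hxy, hyx]

namespace CliffordAlgebra

section

variable {R M : Type*} [CommRing R] [AddCommGroup M] [Module R M] {Q : QuadraticForm R M}

theorem ι_mul_ι_sq_of_isOrtho {a b : M} (h : Q.IsOrtho a b) :
    (ι Q a * ι Q b) ^ 2 = -algebraMap R _ (Q a * Q b) := by
  rw [sq, mul_assoc, ι_mul_ι_mul_of_isOrtho _ h.symm, mul_neg, ← mul_assoc, ι_sq_scalar,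
    ι_sq_scalar, ← map_mul]

theorem commute_ι_ι_mul_ι_of_isOrtho {a c d : M} (hac : Q.IsOrtho a c) (had : Q.IsOrtho a d) :
    Commute (ι Q a) (ι Q c * ι Q d) := by
  rw [Commute, SemiconjBy, ι_mul_ι_mul_of_isOrtho _ hac, ι_mul_ι_comm_of_isOrtho had, mul_neg,
    neg_neg, mul_assoc]

theorem commute_ι_mul_ι_of_isOrtho {a b c d : M} (hac : Q.IsOrtho a c) (had : Q.IsOrtho a d)
    (hbc : Q.IsOrtho b c) (hbd : Q.IsOrtho b d) :
    Commute (ι Q a * ι Q b) (ι Q c * ι Q d) :=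
  (commute_ι_ι_mul_ι_of_isOrtho hac had).mul_left (commute_ι_ι_mul_ι_of_isOrtho hbc hbd)

end

theorem sum_map_ι_inl_mul_ι_inr_dualBasis {R M κ : Type*} [CommRing R] [AddCommGroup M]
    [Module R M] [Fintype κ] [DecidableEq κ]
    {Q : QuadraticForm R (M × Module.Dual R M)} (σ : M ≃ₗ[R] M) (F : Q →qᵢ Q)
    (hF : F.toLinearMap = (σ : M →ₗ[R] M).prodMap (σ.symm : M →ₗ[R] M).dualMap)
    (b : Module.Basis κ R M) :
    ∑ j, map F (ι Q (b j, 0) * ι Q (0, b.dualBasis j))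
      = ∑ j, ι Q (b j, 0) * ι Q (0, b.dualBasis j) := by
  let β : M →ₗ[R] Module.Dual R M →ₗ[R] CliffordAlgebra Q :=
    (LinearMap.mul R _).compl₁₂ (ι Q ∘ₗ .inl R _ _) (ι Q ∘ₗ .inr R _ _)
  have hFβ : ∀ x φ, map F (β x φ) = β (σ x) ((σ.symm : M →ₗ[R] M).dualMap φ) := by
    intro x φ
    simp [β, map_apply_ι, ← QuadraticMap.Isometry.coe_toLinearMap, hF]
  have := (b.map σ).sum_apply_dualBasis_eq β b
  simp only [Module.Basis.map_apply, Module.Basis.map_dualBasis, ← hFβ] at this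
  exact this

section Prod

variable {R M₁ M₂ : Type*} [CommRing R] [AddCommGroup M₁] [Module R M₁] [AddCommGroup M₂]
  [Module R M₂] {B₁ : LinearMap.BilinMap R M₁ R} {B₂ : LinearMap.BilinMap R M₂ R}

local notation "Q" => B₁.toQuadraticMap.prod B₂.toQuadraticMap

theorem ι_inl_mul_ι_inr_sq {x₁ : M₁} {x₂ : M₂} (h : B₁ x₁ x₁ * B₂ x₂ x₂ = 1) :
    (ι Q (x₁, 0) * ι Q (0, x₂)) ^ 2 = -1 := by
  rw [ι_mul_ι_sq_of_isOrtho (.inl_inr _ _), QuadraticMap.prod_apply, QuadraticMap.prod_apply]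
  simp [h]

theorem commute_ι_inl_mul_ι_inr {x₁ y₁ : M₁} {x₂ y₂ : M₂} (h₁ : B₁ x₁ y₁ = 0)
    (h₁' : B₁ y₁ x₁ = 0) (h₂ : B₂ x₂ y₂ = 0) (h₂' : B₂ y₂ x₂ = 0) :
    Commute (ι Q (x₁, 0) * ι Q (0, x₂)) (ι Q (y₁, 0) * ι Q (0, y₂)) :=
  commute_ι_mul_ι_of_isOrtho
    ((QuadraticMap.isOrtho_inl_inl_iff _ _).mpr
      (LinearMap.BilinMap.isOrtho_toQuadraticMap h₁ h₁'))
    (.inl_inr _ _) (.inr_inl _ _)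
    ((QuadraticMap.isOrtho_inr_inr_iff _ _).mpr
      (LinearMap.BilinMap.isOrtho_toQuadraticMap h₂ h₂'))

end Prod

end CliffordAlgebra

theorem stmt1_general {k V : Type*} [Field k] [CharZero k] [AddCommGroup V] [Module k V]
    [FiniteDimensional k V] {n : ℕ} (b : Module.Basis (Fin n) k V)
    (B : LinearMap.BilinForm k V) (hB : B.Nondegenerate)
    (s : Fin n → k) (hs : ∀ i, s i = 1 ∨ s i = -1)
    (horth : ∀ i j, B (b i) (b j) = if i = j then s i else 0)
    (Q : QuadraticForm k (V × Module.Dual k V))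
    (hQ : Q = QuadraticMap.prod (LinearMap.BilinMap.toQuadraticMap B)
      (LinearMap.BilinMap.toQuadraticMap
        (B.compl₁₂ ((B.toDual hB).symm : Module.Dual k V →ₗ[k] V)
          ((B.toDual hB).symm : Module.Dual k V →ₗ[k] V))))
    (σ : V ≃ₗ[k] V)
    (F : (V × Module.Dual k V) →ₗ[k] (V × Module.Dual k V))
    (hF : F = LinearMap.prodMap (σ : V →ₗ[k] V) ((σ.symm : V →ₗ[k] V).dualMap))
    (hFQ : ∀ m, Q (F m) = Q m)
    (p : MvPolynomial (Fin n) k) (hp : p.IsSymmetric) :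
    CliffordAlgebra.map ⟨F, hFQ⟩
        (evalAt (fun j => ι Q (b j, 0) * ι Q (0, b.dualBasis j)) p)
      = evalAt (fun j => ι Q (b j, 0) * ι Q (0, b.dualBasis j)) p := by
  have hs2 : ∀ i, s i * s i = 1 := fun i => by rcases hs i with h | h <;> simp [h]
  have hdual := B.compl₁₂_toDual_symm_dualBasis hB horth hs2
  have hsq : ∀ j, (ι Q (b j, 0) * ι Q (0, b.dualBasis j)) ^ 2 = -1 := fun j => by
    subst hQ
    exact ι_inl_mul_ι_inr_sq (by rw [horth, hdual, if_pos rfl, hs2])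
  have hcomm : ∀ i j, Commute (ι Q (b i, 0) * ι Q (0, b.dualBasis i))
      (ι Q (b j, 0) * ι Q (0, b.dualBasis j)) := fun i j => by
    rcases eq_or_ne i j with rfl | hij
    · exact Commute.refl _
    · subst hQ
      exact commute_ι_inl_mul_ι_inr (by rw [horth, if_neg hij]) (by rw [horth, if_neg hij.symm])
        (by rw [hdual, if_neg hij]) (by rw [hdual, if_neg hij.symm])
  rw [AlgHom.map_evalAt]
  refine evalAt_eq_of_sum_pow_eq (fun i j => (hcomm i j).map _) hcomm
    (Finset.sum_pow_eq_of_sq_eq_neg_one (fun j => ?_) hsq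
      (sum_map_ι_inl_mul_ι_inr_dualBasis σ _ hF b)) hp
  rw [← map_pow, hsq, map_neg, map_one]

/-- Let `V` be a finite-dimensional vector space over a field of characteristic zero,
`B` a nondegenerate symmetric bilinear form with orthonormal basis `b` (`B (b i) (b j) = ±δᵢⱼ`),
`Q` the quadratic form `B ⊕ B⁻¹` on `V × V*`, and let `σ ∈ O(B)` act diagonally on `V × V*`
(via `F = σ × (σ⁻¹)ᵗ`, a quadratic isometry of `Q`).  Then for any symmetric polynomial `p`,
the element `p(e₁ε¹, …, eₙεⁿ)` of the Clifford algebra `Cl(V × V*)` is invariant under the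
induced action of `σ`. -/
theorem stmt1 {k V : Type*} [Field k] [CharZero k] [AddCommGroup V] [Module k V]
    [FiniteDimensional k V] {n : ℕ} (b : Module.Basis (Fin n) k V)
    (B : LinearMap.BilinForm k V) (hB : B.Nondegenerate) (hBsymm : B.IsSymm)
    (s : Fin n → k) (hs : ∀ i, s i = 1 ∨ s i = -1)
    (horth : ∀ i j, B (b i) (b j) = if i = j then s i else 0)
    (Q : QuadraticForm k (V × Module.Dual k V))
    (hQ : Q = QuadraticMap.prod (LinearMap.BilinMap.toQuadraticMap B)
      (LinearMap.BilinMap.toQuadraticMap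
        (B.compl₁₂ ((B.toDual hB).symm : Module.Dual k V →ₗ[k] V)
          ((B.toDual hB).symm : Module.Dual k V →ₗ[k] V))))
    (σ : V ≃ₗ[k] V) (hσ : ∀ x y, B (σ x) (σ y) = B x y)
    (F : (V × Module.Dual k V) →ₗ[k] (V × Module.Dual k V))
    (hF : F = LinearMap.prodMap (σ : V →ₗ[k] V) ((σ.symm : V →ₗ[k] V).dualMap))
    (hFQ : ∀ m, Q (F m) = Q m)
    (p : MvPolynomial (Fin n) k) (hp : p.IsSymmetric) :
    CliffordAlgebra.map ⟨F, hFQ⟩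
        (evalAt (fun j => ι Q (b j, 0) * ι Q (0, b.dualBasis j)) p)
      = evalAt (fun j => ι Q (b j, 0) * ι Q (0, b.dualBasis j)) p :=
  stmt1_general b B hB s hs horth Q hQ σ F hF hFQ p hp
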